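/- Define H(t) = (1/√(πt)) ∫_{-π/2}^{π/2} e^{-sin²φ / t} cos(2φ) dφ for t > 0. Then t^{3/2} H(t) → √π / 4 as t → ∞. -/

import Mathlib

/-!
Since `∫_{-π/2}^{π/2} cos 2φ dφ = 0`, the constant term of `exp (-sin² φ / t)` may be subtracted,
so that `t^{3/2} H(t) = π^{-1/2} ∫ t (exp (-sin² φ / t) - 1) cos 2φ dφ`. The integrand tends to
`-sin² φ cos 2φ` and is dominated by `sin² φ ≤ 1` (from `1 - e^{-x} ≤ x`), so by dominated
convergence the integral tends to `-∫ sin² φ cos 2φ dφ = π/4`.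
-/

open Real Filter MeasureTheory Topology

lemma tendsto_mul_exp_neg_div_sub_one (s : ℝ) :
    Tendsto (fun t : ℝ => t * (exp (-s / t) - 1)) atTop (𝓝 (-s)) := by
  have hderiv : HasDerivAt (fun u : ℝ => exp (-s * u)) (-s) 0 := by
    simpa using ((hasDerivAt_id (0 : ℝ)).const_mul (-s)).exp
  have hinv : Tendsto (fun t : ℝ => t⁻¹) atTop (𝓝[≠] 0) :=
    tendsto_inv_atTop_nhdsGT_zero.mono_right (nhdsWithin_mono _ fun _ hx => ne_of_gt hx)
  refine ((hasDerivAt_iff_tendsto_slope.mp hderiv).comp hinv).congr fun t => ?_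
  simp [slope_def_field, div_eq_mul_inv, mul_comm]

lemma abs_mul_exp_neg_div_sub_one_le {s t : ℝ} (hs : 0 ≤ s) (ht : 0 < t) :
    |t * (exp (-s / t) - 1)| ≤ s := by
  have hexp_le_one : exp (-s / t) ≤ 1 := exp_le_one_iff.mpr (by simp [neg_div]; positivity)
  have hone_sub_le : 1 - exp (-s / t) ≤ s / t := by linarith [add_one_le_exp (-s / t), neg_div t s]
  rw [abs_mul, abs_of_pos ht, abs_of_nonpos (sub_nonpos.mpr hexp_le_one)]
  calc t * -(exp (-s / t) - 1) = t * (1 - exp (-s / t)) := by ring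
    _ ≤ t * (s / t) := by gcongr
    _ = s := by field_simp

lemma tendsto_integral_mul_exp_neg_div_sub_one_mul {α : Type*} [MeasurableSpace α] {μ : Measure α}
    {s g : α → ℝ} (hs : ∀ x, 0 ≤ s x) (hs_meas : AEStronglyMeasurable s μ)
    (hg_meas : AEStronglyMeasurable g μ) (hsg : Integrable (fun x => s x * g x) μ) :
    Tendsto (fun t : ℝ => ∫ x, t * (exp (-s x / t) - 1) * g x ∂μ) atTop
      (𝓝 (-∫ x, s x * g x ∂μ)) := by
  rw [← integral_neg]
  refine tendsto_integral_filter_of_dominated_convergence (fun x => ‖s x * g x‖)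
    (Eventually.of_forall fun t => ?_) ?_ hsg.norm (ae_of_all _ fun x => ?_)
  · exact (((by fun_prop : Continuous fun u : ℝ => t * (exp (-u / t) - 1)).comp_aestronglyMeasurable
      hs_meas).mul hg_meas)
  · filter_upwards [eventually_gt_atTop 0] with t ht
    refine ae_of_all _ fun x => ?_
    rw [norm_mul _ (g x), norm_mul (s x), Real.norm_of_nonneg (hs x)]
    gcongr
    exact abs_mul_exp_neg_div_sub_one_le (hs x) ht
  · simpa [neg_mul] using (tendsto_mul_exp_neg_div_sub_one (s x)).mul_const (g x)

lemma integral_cos_two_mul_neg_pi_div_two_pi_div_two :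
    ∫ φ in -(π / 2)..π / 2, cos (2 * φ) = 0 := by
  simp [intervalIntegral.integral_comp_mul_left (fun x => cos x) two_ne_zero,
    mul_div_cancel₀ π two_ne_zero]

lemma integral_cos_two_mul_sq_neg_pi_div_two_pi_div_two :
    ∫ φ in -(π / 2)..π / 2, cos (2 * φ) ^ 2 = π / 2 := by
  rw [intervalIntegral.integral_comp_mul_left (fun x => cos x ^ 2) two_ne_zero, integral_cos_sq]
  simp [mul_div_cancel₀ π two_ne_zero]
  ring

lemma integral_sin_sq_mul_cos_two_mul_neg_pi_div_two_pi_div_two :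
    ∫ φ in -(π / 2)..π / 2, sin φ ^ 2 * cos (2 * φ) = -(π / 4) := by
  have hsin_sq : ∀ φ, sin φ ^ 2 * cos (2 * φ) = cos (2 * φ) / 2 - cos (2 * φ) ^ 2 / 2 := by
    intro φ; rw [sin_sq_eq_half_sub]; ring
  simp_rw [hsin_sq]
  rw [intervalIntegral.integral_sub, intervalIntegral.integral_div, intervalIntegral.integral_div,
    integral_cos_two_mul_neg_pi_div_two_pi_div_two,
    integral_cos_two_mul_sq_neg_pi_div_two_pi_div_two]
  · ring
  all_goals exact (by fun_prop : Continuous _).intervalIntegrable _ _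

/-- For `H(t) = (1/√(πt)) ∫_{-π/2}^{π/2} e^{-sin²φ/t} cos(2φ) dφ`, we have
`t^{3/2} H(t) → √π/4` as `t → ∞`. -/
theorem stmt5 (H : ℝ → ℝ)
    (hH : ∀ t : ℝ, 0 < t →
      H t = (1 / Real.sqrt (π * t)) *
        ∫ φ in (-(π/2))..(π/2), Real.exp (-(Real.sin φ)^2 / t) * Real.cos (2*φ)) :
    Tendsto (fun t : ℝ => t ^ (3/2 : ℝ) * H t) atTop (nhds (Real.sqrt π / 4)) := by
  have hlim : Tendsto (fun t : ℝ => ∫ φ in -(π / 2)..π / 2,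
      t * (exp (-sin φ ^ 2 / t) - 1) * cos (2 * φ)) atTop (𝓝 (π / 4)) := by
    have h := tendsto_integral_mul_exp_neg_div_sub_one_mul
      (μ := volume.restrict (Set.Ioc (-(π / 2)) (π / 2))) (s := fun φ => sin φ ^ 2)
      (g := fun φ => cos (2 * φ)) (fun φ => sq_nonneg _) (by fun_prop) (by fun_prop)
      (by fun_prop : Continuous _).integrableOn_Ioc
    have hle : -(π / 2) ≤ π / 2 := by linarith [pi_pos]
    simp only [← intervalIntegral.integral_of_le hle] at h
    rwa [integral_sin_sq_mul_cos_two_mul_neg_pi_div_two_pi_div_two, neg_neg] at h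
  have hH_eq : ∀ t > 0, t ^ (3 / 2 : ℝ) * H t = (√π)⁻¹ *
      ∫ φ in -(π / 2)..π / 2, t * (exp (-sin φ ^ 2 / t) - 1) * cos (2 * φ) := by
    intro t ht
    have ht_rpow : t ^ (3 / 2 : ℝ) = t * √t := by
      rw [show (3 / 2 : ℝ) = 1 + 1 / 2 by norm_num, rpow_add ht, rpow_one, sqrt_eq_rpow]
    simp_rw [mul_sub_one, sub_mul, mul_assoc t]
    rw [intervalIntegral.integral_sub ((by fun_prop : Continuous _).intervalIntegrable _ _)
        ((by fun_prop : Continuous _).intervalIntegrable _ _),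
      intervalIntegral.integral_const_mul, intervalIntegral.integral_const_mul,
      integral_cos_two_mul_neg_pi_div_two_pi_div_two, mul_zero, sub_zero,
      hH t ht, sqrt_mul pi_pos.le, ht_rpow]
    field_simp
  have hval : (√π)⁻¹ * (π / 4) = √π / 4 := by
    field_simp
    exact (sq_sqrt pi_pos.le).symm
  refine (hval ▸ hlim.const_mul (√π)⁻¹).congr' ?_
  filter_upwards [eventually_gt_atTop 0] with t ht
  exact (hH_eq t ht).symm
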